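/- Let W be a complex Hilbert space, A = B(W) the C*-algebra of bounded linear operators on W, and M a Hilbert C*-module over A. Let n ∈ ℕ, let w_1,…,w_n ∈ M satisfy that ⟨w_i, w_j⟩ is a compact operator for all i, j, and let ε > 0. Then there exist q_1,…,q_n ∈ M, each either 0 or normalized and mutually orthogonal (⟨q_i,q_j⟩ = 0 for i ≠ j), an upper triangular matrix R ∈ A^{n×n}, and a matrix R_inv ∈ A^{n×n}, such that q_j = Σ_{i=1}^n w_i (R_inv)_{ij} for every j and ‖ w_j − Σ_{i=1}^n q_i R_{ij} ‖_M ≤ ε for every j = 1,…,n. -/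

import Mathlib

/-!
Gram–Schmidt with spectral truncation. Once `q₁, …, q_k` are built, the residual
`v = w_{k+1} - ∑ᵢ qᵢ ⟨qᵢ, w_{k+1}⟩` is orthogonal to all of them and `a = ⟨v, v⟩` is a positive
compact operator. The nonzero spectrum of a compact self-adjoint operator consists of eigenvalues
with mutually orthogonal eigenvectors, so it cannot fill the interval `(0, ε²)`; choose `δ` there
outside the spectrum. Then `χ = 1_{(δ, ∞)}` is continuous on the spectrum, and for
`q = v · a^{-1/2} χ(a)` we get `⟨q, q⟩ = χ(a)`, a projection, while
`v - q · a^{1/2} χ(a) = v · (1 - χ)(a)` has norm at most `√δ ≤ ε`.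
-/

/-- A (right) Hilbert C*-module over a C*-algebra `A`: a right `A`-module `M` with an
`A`-valued inner product, `A`-linear in the second variable, satisfying the listed axioms,
whose norm is `‖u‖ = ‖⟨u,u⟩‖^(1/2)` (so that completeness of `M` as a normed group is
completeness for this norm). -/
structure HilbertCStarModule (A : Type*) (M : Type*) [CStarAlgebra A] [PartialOrder A]
    [StarOrderedRing A] [NormedAddCommGroup M] where
  smul : M → A → M
  inner : M → M → A
  add_smul : ∀ (u v : M) (c : A), smul (u + v) c = smul u c + smul v c
  smul_add : ∀ (u : M) (c d : A), smul u (c + d) = smul u c + smul u d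
  smul_mul : ∀ (u : M) (c d : A), smul u (c * d) = smul (smul u c) d
  smul_one : ∀ u : M, smul u 1 = u
  inner_add_right : ∀ u v w : M, inner u (v + w) = inner u v + inner u w
  inner_smul_right : ∀ (u v : M) (c : A), inner u (smul v c) = inner u v * c
  star_inner : ∀ u v : M, star (inner u v) = inner v u
  inner_self_nonneg : ∀ u : M, 0 ≤ inner u u
  inner_self_eq_zero : ∀ u : M, inner u u = 0 → u = 0
  norm_eq : ∀ u : M, ‖u‖ = Real.sqrt ‖inner u u‖

lemma continuousOn_ite_le_of_notMem {s : Set ℝ} {δ : ℝ} (hδ : δ ∉ s) {u w : ℝ → ℝ}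
    (hu : ContinuousOn u (Set.Iic δ)) (hw : ContinuousOn w (Set.Ici δ)) :
    ContinuousOn (fun t => if t ≤ δ then u t else w t) s := by
  refine ContinuousOn.if ?_ (hu.mono ?_) (hw.mono ?_)
  · rintro t ⟨hts, htδ⟩
    rw [show {t : ℝ | t ≤ δ} = Set.Iic δ from rfl, frontier_Iic, Set.mem_singleton_iff] at htδ
    exact absurd (htδ ▸ hts) hδ
  · exact Set.inter_subset_right.trans (closure_Iic δ).subset
  · simp_rw [not_le]
    exact Set.inter_subset_right.trans (closure_Ioi δ).subset

theorem IsCompactOperator.not_pairwise_le_norm_sub {𝕜 X Y : Type*} [NontriviallyNormedField 𝕜]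
    [NormedAddCommGroup X] [NormedSpace 𝕜 X] [NormedAddCommGroup Y] [NormedSpace 𝕜 Y]
    {T : X →L[𝕜] Y} (hT : IsCompactOperator T) {x : ℕ → X} {R ρ : ℝ} (hx : ∀ k, ‖x k‖ ≤ R)
    (hρ : 0 < ρ) : ¬ Pairwise fun k l => ρ ≤ ‖T (x k) - T (x l)‖ := by
  intro hsep
  obtain ⟨K, hK, hTK⟩ := hT.image_closedBall_subset_compact R
  obtain ⟨y, -, φ, hφ, hy⟩ := hK.tendsto_subseq fun k => hTK ⟨x k, by simpa using hx k, rfl⟩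
  obtain ⟨N, hN⟩ := Metric.cauchySeq_iff'.mp hy.cauchySeq ρ hρ
  have hclose : ‖T (x (φ (N + 1))) - T (x (φ N))‖ < ρ := by
    simpa [dist_eq_norm_sub] using hN (N + 1) (by omega)
  exact hclose.not_ge (hsep (hφ.injective.ne (by omega)))

section CompactSelfAdjoint

variable {E : Type*} [NormedAddCommGroup E] [InnerProductSpace ℂ E] [CompleteSpace E]

open Module End

theorem IsCompactOperator.exists_unit_eigenvector_of_mem_spectrum {T : E →L[ℂ] E}
    (hT : IsCompactOperator T) {μ : ℝ} (hμ : μ ≠ 0) (hμT : μ ∈ spectrum ℝ T) :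
    ∃ x ∈ eigenspace (T : End ℂ E) μ, ‖x‖ = 1 := by
  rw [← spectrum.algebraMap_mem_iff ℂ, ← hT.hasEigenvalue_iff_mem_spectrum (by simpa using hμ)]
    at hμT
  obtain ⟨v, hv, hv0⟩ := hμT.exists_hasEigenvector
  refine ⟨(‖v‖⁻¹ : ℂ) • v, Submodule.smul_mem _ _ hv, ?_⟩
  rw [norm_smul, norm_inv, Complex.norm_real, norm_norm, inv_mul_cancel₀ (norm_ne_zero_iff.mpr hv0)]

theorem IsCompactOperator.exists_mem_Ioo_notMem_spectrum {T : E →L[ℂ] E}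
    (hT : IsCompactOperator T) (hT' : IsSelfAdjoint T) {η : ℝ} (hη : 0 < η) :
    ∃ δ ∈ Set.Ioo 0 η, δ ∉ spectrum ℝ T := by
  by_contra! hspec
  -- Unit eigenvectors for the distinct eigenvalues `μ k ∈ (η/2, η)` given by the Fredholm
  -- alternative are orthonormal, so their images under `T` are `η/2`-separated.
  set μ : ℕ → ℝ := fun k => η * (k + 2) / (k + 3)
  have hμ : ∀ k, μ k ∈ Set.Ioo (η / 2) η := fun k =>
    ⟨by rw [lt_div_iff₀ (by positivity)]; nlinarith, by rw [div_lt_iff₀ (by positivity)]; nlinarith⟩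
  have hμ_inj : Function.Injective μ := fun k l hkl => by
    simp only [μ] at hkl
    field_simp at hkl
    exact_mod_cast (by nlinarith : (k : ℝ) = l)
  choose x hx hx1 using fun k => hT.exists_unit_eigenvector_of_mem_spectrum
    ((half_pos hη).trans (hμ k).1).ne' (hspec _ ⟨(half_pos hη).trans (hμ k).1, (hμ k).2⟩)
  refine hT.not_pairwise_le_norm_sub (fun k => (hx1 k).le) (half_pos hη) fun k l hkl => ?_
  have horth : inner ℂ (x k) (x l) = 0 :=
    hT'.isSymmetric.orthogonalFamily_eigenspaces (by simpa using hμ_inj.ne hkl)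
      ⟨x k, hx k⟩ ⟨x l, hx l⟩
  have hTx : ∀ k, T (x k) = (μ k : ℂ) • x k := fun k => mem_eigenspace_iff.mp (hx k)
  simp only [hTx]
  have hpyth : ‖(μ k : ℂ) • x k - (μ l : ℂ) • x l‖ ^ 2 = μ k ^ 2 + μ l ^ 2 := by
    rw [sq, @norm_sub_mul_self ℂ, inner_smul_left, inner_smul_right, horth]
    simp [norm_smul, hx1, sq]
  refine le_of_pow_le_pow_left₀ two_ne_zero (norm_nonneg _) ?_
  rw [hpyth]
  nlinarith [(hμ k).1, half_pos hη, sq_nonneg (μ l)]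

end CompactSelfAdjoint

namespace HilbertCStarModule

variable {A M : Type*} [CStarAlgebra A] [PartialOrder A] [StarOrderedRing A]
  [NormedAddCommGroup M] (H : HilbertCStarModule A M)

lemma inner_add_left (u v x : M) : H.inner (u + v) x = H.inner u x + H.inner v x := by
  rw [← H.star_inner, H.inner_add_right, star_add, H.star_inner, H.star_inner]

def innerRight (u : M) : M →+ A := AddMonoidHom.mk' (H.inner u) (H.inner_add_right u)

def innerLeft (x : M) : M →+ A := AddMonoidHom.mk' (H.inner · x) (H.inner_add_left · · x)

def smulRight (u : M) : A →+ M := AddMonoidHom.mk' (H.smul u) (H.smul_add u)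

def smulLeft (c : A) : M →+ M := AddMonoidHom.mk' (H.smul · c) (H.add_smul · · c)

lemma inner_zero_left (x : M) : H.inner 0 x = 0 := map_zero (H.innerLeft x)

lemma inner_sub_right (u v x : M) : H.inner u (v - x) = H.inner u v - H.inner u x :=
  map_sub (H.innerRight u) v x

lemma inner_sub_left (u v x : M) : H.inner (u - v) x = H.inner u x - H.inner v x :=
  map_sub (H.innerLeft x) u v

lemma inner_sum_right {ι : Type*} (s : Finset ι) (u : M) (f : ι → M) :
    H.inner u (∑ i ∈ s, f i) = ∑ i ∈ s, H.inner u (f i) :=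
  map_sum (H.innerRight u) f s

lemma inner_sum_left {ι : Type*} (s : Finset ι) (f : ι → M) (x : M) :
    H.inner (∑ i ∈ s, f i) x = ∑ i ∈ s, H.inner (f i) x :=
  map_sum (H.innerLeft x) f s

lemma smul_zero (u : M) : H.smul u 0 = 0 := map_zero (H.smulRight u)

lemma smul_sub (u : M) (c d : A) : H.smul u (c - d) = H.smul u c - H.smul u d :=
  map_sub (H.smulRight u) c d

lemma smul_neg (u : M) (c : A) : H.smul u (-c) = -H.smul u c := map_neg (H.smulRight u) c

lemma zero_smul (c : A) : H.smul 0 c = 0 := map_zero (H.smulLeft c)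

lemma sum_smul {ι : Type*} (s : Finset ι) (f : ι → M) (c : A) :
    H.smul (∑ i ∈ s, f i) c = ∑ i ∈ s, H.smul (f i) c :=
  map_sum (H.smulLeft c) f s

lemma inner_smul_left (u v : M) (c : A) :
    H.inner (H.smul u c) v = star c * H.inner u v := by
  rw [← H.star_inner, H.inner_smul_right, star_mul, H.star_inner]

lemma inner_smul_smul (u : M) (c d : A) :
    H.inner (H.smul u c) (H.smul u d) = star c * H.inner u u * d := by
  rw [H.inner_smul_right, H.inner_smul_left, mul_assoc]

lemma smul_inner_self_of_isIdempotentElem {q : M} (hq : IsIdempotentElem (H.inner q q)) :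
    H.smul q (H.inner q q) = q := by
  have hzero : H.inner (H.smul q (H.inner q q) - q) (H.smul q (H.inner q q) - q) = 0 := by
    have hq' : H.inner q (H.smul q (H.inner q q) - q) = 0 := by
      rw [H.inner_sub_right, H.inner_smul_right, hq.eq, sub_self]
    rw [H.inner_sub_left, H.inner_smul_left, hq', mul_zero, sub_zero]
  exact sub_eq_zero.mp (H.inner_self_eq_zero _ hzero)

lemma inner_self_mul_inner_of_isIdempotentElem {q : M} (hq : IsIdempotentElem (H.inner q q))
    (x : M) : H.inner q q * H.inner q x = H.inner q x := by
  conv_lhs =>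
    rw [← H.star_inner q q, ← H.inner_smul_left, H.smul_inner_self_of_isIdempotentElem hq]

lemma inner_sub_sum_smul_inner_eq_zero {ι : Type*} [Fintype ι] {q : ι → M}
    (hidem : ∀ i, IsIdempotentElem (H.inner (q i) (q i)))
    (horth : Pairwise fun i j => H.inner (q i) (q j) = 0) (x : M) (j : ι) :
    H.inner (q j) (x - ∑ i, H.smul (q i) (H.inner (q i) x)) = 0 := by
  classical
  rw [H.inner_sub_right, H.inner_sum_right, Fintype.sum_eq_single j, H.inner_smul_right,
    H.inner_self_mul_inner_of_isIdempotentElem (hidem j), sub_self]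
  intro i hij
  rw [H.inner_smul_right, horth hij.symm, zero_mul]

lemma eq_zero_or_normalized_of_isIdempotentElem {q : M} (hq : IsIdempotentElem (H.inner q q)) :
    q = 0 ∨ (H.inner q q ≠ 0 ∧ H.inner q q * H.inner q q = H.inner q q) := by
  by_cases h0 : H.inner q q = 0
  · exact Or.inl (H.inner_self_eq_zero q h0)
  · exact Or.inr ⟨h0, hq⟩

lemma inner_smul_cfc_smul_cfc (v : M) {f g : ℝ → ℝ}
    (hf : ContinuousOn f (spectrum ℝ (H.inner v v)))
    (hg : ContinuousOn g (spectrum ℝ (H.inner v v))) :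
    H.inner (H.smul v (cfc f (H.inner v v))) (H.smul v (cfc g (H.inner v v))) =
      cfc (fun t => f t * t * g t) (H.inner v v) := by
  have hv : IsSelfAdjoint (H.inner v v) := .of_nonneg (H.inner_self_nonneg v)
  rw [H.inner_smul_smul, (cfc_predicate f (H.inner v v)).star_eq,
    cfc_mul (fun t => f t * t) g _ (hf.mul continuousOn_id) hg, cfc_mul f (fun t => t) _ hf,
    cfc_id' ℝ _ hv]

def ApproxNormalizable (ε : ℝ) (v : M) : Prop :=
  ∃ T S : A, IsIdempotentElem (H.inner (H.smul v T) (H.smul v T)) ∧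
    ‖v - H.smul (H.smul v T) S‖ ≤ ε

variable {H} in
lemma ApproxNormalizable.mono {ε ε' : ℝ} {v : M} (h : H.ApproxNormalizable ε v) (hε : ε ≤ ε') :
    H.ApproxNormalizable ε' v :=
  let ⟨T, S, hidem, herr⟩ := h
  ⟨T, S, hidem, herr.trans hε⟩

theorem approxNormalizable_sqrt_of_notMem_spectrum {v : M} {δ : ℝ} (hδ : 0 < δ)
    (hδv : δ ∉ spectrum ℝ (H.inner v v)) : H.ApproxNormalizable (√δ) v := by
  set a := H.inner v v
  have ha : 0 ≤ a := H.inner_self_nonneg v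
  set χ : ℝ → ℝ := fun t => if t ≤ δ then 0 else 1
  set g : ℝ → ℝ := fun t => if t ≤ δ then 0 else (√t)⁻¹
  set s : ℝ → ℝ := fun t => if t ≤ δ then 0 else √t
  have hχ : ContinuousOn χ (spectrum ℝ a) :=
    continuousOn_ite_le_of_notMem hδv continuousOn_const continuousOn_const
  have hg : ContinuousOn g (spectrum ℝ a) :=
    continuousOn_ite_le_of_notMem hδv continuousOn_const <|
      Real.continuous_sqrt.continuousOn.inv₀ fun t ht => (Real.sqrt_pos.2 (hδ.trans_le ht)).ne'
  have hs : ContinuousOn s (spectrum ℝ a) :=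
    continuousOn_ite_le_of_notMem hδv continuousOn_const Real.continuous_sqrt.continuousOn
  have hgtg : ∀ t, g t * t * g t = χ t := fun t => by
    simp only [g, χ]
    split_ifs with ht
    · simp
    · have ht0 : 0 < t := hδ.trans (not_le.mp ht)
      field_simp
      rw [Real.sq_sqrt ht0.le]
  have hgs : ∀ t, g t * s t = χ t := fun t => by
    simp only [g, s, χ]
    split_ifs with ht
    · simp
    · exact inv_mul_cancel₀ (Real.sqrt_pos.2 (hδ.trans (not_le.mp ht))).ne'
  refine ⟨cfc g a, cfc s a, ?_, ?_⟩
  · rw [H.inner_smul_cfc_smul_cfc v hg hg, funext hgtg, IsIdempotentElem, ← cfc_mul χ χ a hχ hχ]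
    congr 1
    ext t
    simp only [χ]
    split_ifs <;> simp
  · have hres :
        v - H.smul (H.smul v (cfc g a)) (cfc s a) = H.smul v (cfc (fun t => 1 - χ t) a) := by
      rw [← H.smul_mul, ← cfc_mul g s a hg hs, funext hgs, cfc_sub _ _ a continuousOn_const hχ,
        cfc_const_one ℝ a, H.smul_sub, H.smul_one]
    have hψ : ContinuousOn (fun t => 1 - χ t) (spectrum ℝ a) := continuousOn_const.sub hχ
    rw [hres, H.norm_eq, H.inner_smul_cfc_smul_cfc v hψ hψ]
    refine Real.sqrt_le_sqrt (norm_cfc_le hδ.le fun t ht => ?_)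
    simp only [χ]
    split_ifs with htδ
    · simpa [abs_of_nonneg (spectrum_nonneg_of_nonneg ha ht)] using htδ
    · simpa using hδ.le

section RightSpan

variable {ι : Type*} [Fintype ι]

def rightSpan (w : ι → M) : AddSubgroup M where
  carrier := {u | ∃ c : ι → A, u = ∑ i, H.smul (w i) (c i)}
  add_mem' := by
    rintro _ _ ⟨c, rfl⟩ ⟨d, rfl⟩
    exact ⟨c + d, by simp only [Pi.add_apply, H.smul_add, Finset.sum_add_distrib]⟩
  zero_mem' := ⟨0, by simp only [Pi.zero_apply, H.smul_zero, Finset.sum_const_zero]⟩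
  neg_mem' := by
    rintro _ ⟨c, rfl⟩
    exact ⟨-c, by simp only [Pi.neg_apply, H.smul_neg, Finset.sum_neg_distrib]⟩

lemma self_mem_rightSpan (w : ι → M) (i : ι) : w i ∈ H.rightSpan w := by
  classical
  refine ⟨Pi.single i 1, ?_⟩
  rw [Fintype.sum_eq_single i fun j hj => by rw [Pi.single_eq_of_ne hj, H.smul_zero],
    Pi.single_eq_same, H.smul_one]

lemma smul_mem_rightSpan {w : ι → M} {u : M} (hu : u ∈ H.rightSpan w) (c : A) :
    H.smul u c ∈ H.rightSpan w := by
  obtain ⟨d, rfl⟩ := hu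
  exact ⟨fun i => d i * c, by simp only [H.sum_smul, H.smul_mul]⟩

end RightSpan

lemma sum_smul_update_update {ι : Type*} [Fintype ι] [DecidableEq ι] {q : ι → M} {K : ι}
    (hq : q K = 0) (r : ι → A) (x : M) (c : A) :
    ∑ i, H.smul (Function.update q K x i) (Function.update r K c i) =
      H.smul x c + ∑ i, H.smul (q i) (r i) := by
  rw [Fintype.sum_eq_add_sum_compl K, Fintype.sum_eq_add_sum_compl K fun i => H.smul (q i) (r i),
    Function.update_self, Function.update_self, hq, H.zero_smul, zero_add]
  congr 1
  refine Finset.sum_congr rfl fun i hi => ?_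
  have hiK : i ≠ K := by simpa using hi
  rw [Function.update_of_ne hiK, Function.update_of_ne hiK]

section GramSchmidt

variable {n : ℕ} (w : Fin n → M) (ε : ℝ)

structure IsApproxQRUpTo (k : ℕ) (q : Fin n → M) : Prop where
  isIdempotentElem : ∀ j, IsIdempotentElem (H.inner (q j) (q j))
  orthogonal : Pairwise fun i j => H.inner (q i) (q j) = 0
  mem_rightSpan : ∀ j, q j ∈ H.rightSpan w
  eq_zero : ∀ j : Fin n, k ≤ j → q j = 0
  exists_column : ∀ j : Fin n, j < k → ∃ r : Fin n → A,
    (∀ i, j < i → r i = 0) ∧ ‖w j - ∑ i, H.smul (q i) (r i)‖ ≤ ε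

lemma isApproxQRUpTo_zero : H.IsApproxQRUpTo w ε 0 0 where
  isIdempotentElem _ := by simp only [Pi.zero_apply, H.inner_zero_left, IsIdempotentElem.zero]
  orthogonal _ _ _ := H.inner_zero_left _
  mem_rightSpan _ := zero_mem _
  eq_zero _ _ := rfl
  exists_column _ h := absurd h (Nat.not_lt_zero _)

variable {H w ε}

lemma IsApproxQRUpTo.succ {k : ℕ} {q : Fin n → M} (h : H.IsApproxQRUpTo w ε k q) (hk : k < n)
    (hw : ∀ v ∈ H.rightSpan w, H.ApproxNormalizable ε v) :
    ∃ q' : Fin n → M, H.IsApproxQRUpTo w ε (k + 1) q' := by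
  classical
  set K : Fin n := ⟨k, hk⟩
  set v := w K - ∑ i, H.smul (q i) (H.inner (q i) (w K))
  have hv : v ∈ H.rightSpan w :=
    sub_mem (H.self_mem_rightSpan w K)
      (sum_mem fun i _ => H.smul_mem_rightSpan (h.mem_rightSpan i) _)
  obtain ⟨T, S, hidem, herr⟩ := hw v hv
  have hqK : q K = 0 := h.eq_zero K le_rfl
  have hqv : ∀ i, H.inner (q i) (H.smul v T) = 0 := fun i => by
    rw [H.inner_smul_right, H.inner_sub_sum_smul_inner_eq_zero h.isIdempotentElem h.orthogonal,
      zero_mul]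
  refine ⟨Function.update q K (H.smul v T), ⟨?_, ?_, ?_, ?_, ?_⟩⟩
  · exact (Function.forall_update_iff q fun j x => IsIdempotentElem (H.inner x x)).mpr
      ⟨hidem, fun j _ => h.isIdempotentElem j⟩
  · intro i j hij
    rcases eq_or_ne i K with rfl | hi <;> rcases eq_or_ne j K with rfl | hj
    · exact absurd rfl hij
    · rw [Function.update_self, Function.update_of_ne hj, ← H.star_inner, hqv, star_zero]
    · rw [Function.update_self, Function.update_of_ne hi]
      exact hqv i
    · rw [Function.update_of_ne hi, Function.update_of_ne hj]
      exact h.orthogonal hij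
  · exact (Function.forall_update_iff q fun j x => x ∈ H.rightSpan w).mpr
      ⟨H.smul_mem_rightSpan hv T, fun j _ => h.mem_rightSpan j⟩
  · intro j hj
    rw [Function.update_of_ne (Fin.ne_of_val_ne (by simp only [K]; omega))]
    exact h.eq_zero j (by omega)
  · intro j hj
    rcases (Nat.lt_succ_iff_lt_or_eq.mp hj) with hjk | hjk
    · obtain ⟨r, hr_tri, hr_err⟩ := h.exists_column j hjk
      refine ⟨r, hr_tri, ?_⟩
      have hsum := H.sum_smul_update_update hqK r (H.smul v T) (r K)
      rw [Function.update_eq_self, hr_tri K hjk, H.smul_zero, zero_add] at hsum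
      rwa [hsum]
    · obtain rfl : j = K := Fin.ext hjk
      refine ⟨Function.update (fun i => H.inner (q i) (w K)) K S, fun i hi => ?_, ?_⟩
      · rw [Function.update_of_ne hi.ne', h.eq_zero i hi.le, H.inner_zero_left]
      · rw [H.sum_smul_update_update hqK, show ∀ a b c : M, a - (b + c) = (a - c) - b by
          intros; abel]
        exact herr

theorem exists_approxQR_of_forall_approxNormalizable
    (hw : ∀ v ∈ H.rightSpan w, H.ApproxNormalizable ε v) :
    ∃ (q : Fin n → M) (R Rinv : Matrix (Fin n) (Fin n) A),
      (∀ j : Fin n, q j = 0 ∨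
        (H.inner (q j) (q j) ≠ 0 ∧
          H.inner (q j) (q j) * H.inner (q j) (q j) = H.inner (q j) (q j))) ∧
      (∀ i j : Fin n, i ≠ j → H.inner (q i) (q j) = 0) ∧
      (∀ i j : Fin n, j < i → R i j = 0) ∧
      (∀ j : Fin n, q j = ∑ i, H.smul (w i) (Rinv i j)) ∧
      (∀ j : Fin n, ‖w j - ∑ i, H.smul (q i) (R i j)‖ ≤ ε) := by
  have hsteps : ∀ k ≤ n, ∃ q, H.IsApproxQRUpTo w ε k q := by
    intro k hk
    induction k with
    | zero => exact ⟨0, H.isApproxQRUpTo_zero w ε⟩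
    | succ k ih =>
      obtain ⟨q, hq⟩ := ih (by omega)
      exact hq.succ (by omega) hw
  obtain ⟨q, hq⟩ := hsteps n le_rfl
  choose r hr_tri hr_err using fun j : Fin n => hq.exists_column j j.isLt
  choose c hc using fun j => hq.mem_rightSpan j
  exact ⟨q, Matrix.of fun i j => r j i, Matrix.of fun i j => c j i,
    fun j => H.eq_zero_or_normalized_of_isIdempotentElem (hq.isIdempotentElem j),
    fun _ _ hij => hq.orthogonal hij, fun i j hji => hr_tri j i hji, hc, hr_err⟩

end GramSchmidt

lemma isCompactOperator_inner_of_mem_rightSpan {E : Type*} [NormedAddCommGroup E]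
    [InnerProductSpace ℂ E] [CompleteSpace E] {M : Type*} [NormedAddCommGroup M]
    (H : HilbertCStarModule (E →L[ℂ] E) M) {ι : Type*} [Fintype ι] {w : ι → M}
    (hw : ∀ i j, IsCompactOperator (H.inner (w i) (w j))) {u v : M}
    (hu : u ∈ H.rightSpan w) (hv : v ∈ H.rightSpan w) : IsCompactOperator (H.inner u v) := by
  obtain ⟨c, rfl⟩ := hu
  obtain ⟨d, rfl⟩ := hv
  simp only [H.inner_sum_left, H.inner_sum_right, H.inner_smul_left, H.inner_smul_right]
  refine Submodule.sum_mem (compactOperator (RingHom.id ℂ) E E) fun i _ =>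
    Submodule.sum_mem _ fun j _ => ?_
  show IsCompactOperator (star (c i) * (H.inner (w i) (w j) * d j))
  exact ((hw i j).comp_clm (d j)).clm_comp (star (c i))

end HilbertCStarModule

theorem qr_decomposition_in_module_over_BW_general
    {W : Type*} [NormedAddCommGroup W] [InnerProductSpace ℂ W] [CompleteSpace W]
    {M : Type*} [NormedAddCommGroup M]
    (H : HilbertCStarModule (W →L[ℂ] W) M)
    (n : ℕ) (w : Fin n → M)
    (h_compact : ∀ i j : Fin n, IsCompactOperator ⇑(H.inner (w i) (w j)))
    (ε : ℝ) (hε : 0 < ε) :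
    ∃ (q : Fin n → M) (R Rinv : Matrix (Fin n) (Fin n) (W →L[ℂ] W)),
      (∀ j : Fin n, q j = 0 ∨
        (H.inner (q j) (q j) ≠ 0 ∧
          H.inner (q j) (q j) * H.inner (q j) (q j) = H.inner (q j) (q j))) ∧
      (∀ i j : Fin n, i ≠ j → H.inner (q i) (q j) = 0) ∧
      (∀ i j : Fin n, j < i → R i j = 0) ∧
      (∀ j : Fin n, q j = ∑ i, H.smul (w i) (Rinv i j)) ∧
      (∀ j : Fin n, ‖w j - ∑ i, H.smul (q i) (R i j)‖ ≤ ε) := by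
  refine HilbertCStarModule.exists_approxQR_of_forall_approxNormalizable fun v hv => ?_
  have hvv : IsCompactOperator (H.inner v v) :=
    H.isCompactOperator_inner_of_mem_rightSpan h_compact hv hv
  obtain ⟨δ, ⟨hδ, hδε⟩, hδv⟩ :=
    hvv.exists_mem_Ioo_notMem_spectrum (.of_nonneg (H.inner_self_nonneg v)) (pow_pos hε 2)
  exact (H.approxNormalizable_sqrt_of_notMem_spectrum hδ hδv).mono
    ((Real.sqrt_le_sqrt hδε.le).trans_eq (Real.sqrt_sq hε.le))

/-- **Approximate QR decomposition in Hilbert C*-modules over `B(W)`.** Given `w 1, …, w n`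
with all `⟨w i, w j⟩` compact and `ε > 0`, there are `q 1, …, q n`, each zero or normalized
and mutually orthogonal, an upper triangular matrix `R` and a matrix `R_inv` over `B(W)`,
such that `q j = ∑ i, w i • (R_inv i j)` and `‖w j − ∑ i, q i • (R i j)‖ ≤ ε` for all `j`. -/
theorem qr_decomposition_in_module_over_BW
    {W : Type*} [NormedAddCommGroup W] [InnerProductSpace ℂ W] [CompleteSpace W]
    {M : Type*} [NormedAddCommGroup M] [CompleteSpace M]
    (H : HilbertCStarModule (W →L[ℂ] W) M)
    (n : ℕ) (w : Fin n → M)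
    (h_compact : ∀ i j : Fin n, IsCompactOperator ⇑(H.inner (w i) (w j)))
    (ε : ℝ) (hε : 0 < ε) :
    ∃ (q : Fin n → M) (R Rinv : Matrix (Fin n) (Fin n) (W →L[ℂ] W)),
      (∀ j : Fin n, q j = 0 ∨
        (H.inner (q j) (q j) ≠ 0 ∧
          H.inner (q j) (q j) * H.inner (q j) (q j) = H.inner (q j) (q j))) ∧
      (∀ i j : Fin n, i ≠ j → H.inner (q i) (q j) = 0) ∧
      (∀ i j : Fin n, j < i → R i j = 0) ∧
      (∀ j : Fin n, q j = ∑ i, H.smul (w i) (Rinv i j)) ∧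
      (∀ j : Fin n, ‖w j - ∑ i, H.smul (q i) (R i j)‖ ≤ ε) :=
  qr_decomposition_in_module_over_BW_general H n w h_compact ε hε
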